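/- arXiv:1905.01824 — 6 statements merged into one kernel-verified Lean document; each statement's English description precedes it below -/
import Mathlib

section
/- Two bipartite pure states ψ, φ : Fin d₁ × Fin d₂ → ℂ are SLOCC-equivalent if and only if their coefficient matrices have the same rank (Schmidt number), i.e., there exist invertible complex matrices A (d₁×d₁) and B (d₂×d₂) with φ(i,j) = Σ_{k,l} A(i,k) B(j,l) ψ(k,l) if and only if rank C_φ = rank C_ψ. -/
/-!
SLOCC equivalence of `ψ` and `φ` says `C_φ = A C_ψ Bᵀ`, and invertible factors do not change
rank. Conversely, two linear maps `f g : V → W` of equal rank differ by automorphisms on both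
sides: each is an isomorphism from a complement of its kernel onto its range, and by
rank–nullity the kernels, the kernel complements and the range complements of `f` and `g`
have matching dimensions, so gluing isomorphisms between these pieces gives the automorphisms.
-/

open Module LinearMap
open scoped Matrix

section LinearEquivalence

variable {K V W : Type*} [DivisionRing K] [AddCommGroup V] [Module K V] [AddCommGroup W]
  [Module K W]

lemma Submodule.exists_linearEquiv_of_isCompl {p p' : Submodule K V} {q q' : Submodule K W}
    (hp : IsCompl p p') (hq : IsCompl q q') (e₁ : p ≃ₗ[K] q) (e₂ : p' ≃ₗ[K] q') :
    ∃ e : V ≃ₗ[K] W, (∀ x : p, e x = e₁ x) ∧ ∀ x : p', e x = e₂ x :=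
  ⟨(p.prodEquivOfIsCompl p' hp).symm ≪≫ₗ (e₁.prodCongr e₂) ≪≫ₗ q.prodEquivOfIsCompl q' hq,
    fun x => by simp, fun x => by simp⟩

variable [FiniteDimensional K V] [FiniteDimensional K W]

lemma LinearMap.exists_linearEquiv_eq_comp_comp_of_finrank_range_eq (f g : V →ₗ[K] W)
    (h : finrank K (range f) = finrank K (range g)) :
    ∃ (e : W ≃ₗ[K] W) (e' : V ≃ₗ[K] V), g = e ∘ₗ f ∘ₗ e' := by
  obtain ⟨C, hC⟩ := (ker f).exists_isCompl
  obtain ⟨D, hD⟩ := (ker g).exists_isCompl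
  obtain ⟨Rf, hRf⟩ := (range f).exists_isCompl
  obtain ⟨Rg, hRg⟩ := (range g).exists_isCompl
  let f' := f.kerComplementEquivRange hC.symm
  let g' := g.kerComplementEquivRange hD.symm
  have hCD : finrank K D = finrank K C := by rw [f'.finrank_eq, g'.finrank_eq, h]
  have hker : finrank K (ker g) = finrank K (ker f) := by
    have := f.finrank_range_add_finrank_ker
    have := g.finrank_range_add_finrank_ker
    omega
  have hR : finrank K Rf = finrank K Rg := by
    have := Submodule.finrank_add_eq_of_isCompl hRf
    have := Submodule.finrank_add_eq_of_isCompl hRg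
    omega
  let α : D ≃ₗ[K] C := .ofFinrankEq _ _ hCD
  obtain ⟨e', he'ker, he'⟩ :=
    Submodule.exists_linearEquiv_of_isCompl hD hC (.ofFinrankEq _ _ hker) α
  obtain ⟨e, he, -⟩ :=
    Submodule.exists_linearEquiv_of_isCompl hRf hRg (f'.symm ≪≫ₗ α.symm ≪≫ₗ g')
      (.ofFinrankEq _ _ hR)
  refine ⟨e, e', LinearMap.ext fun v => ?_⟩
  obtain ⟨k, d, hk, hd, rfl⟩ := Submodule.codisjoint_iff_exists_add_eq.mp hD.codisjoint v
  have hgk : g k = 0 := hk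
  have hfk : f (e' k) = 0 := by rw [he'ker ⟨k, hk⟩]; exact mem_ker.mp (Subtype.prop _)
  have hfα : f (α ⟨d, hd⟩) = f' (α ⟨d, hd⟩) := rfl
  have hgd : g d = g' ⟨d, hd⟩ := rfl
  simp [hgk, hfk, hgd, he' ⟨d, hd⟩, hfα, he]

end LinearEquivalence

namespace Matrix

variable {m n : Type*} [Fintype m] [Fintype n]

theorem mul_mul_transpose_apply {R : Type*} [CommSemiring R] (A : Matrix m m R)
    (M : Matrix m n R) (B : Matrix n n R) (i : m) (j : n) :
    (A * M * Bᵀ) i j = ∑ k, ∑ l, A i k * B j l * M k l := by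
  simp only [mul_apply, transpose_apply, Finset.sum_mul, mul_right_comm _ (B j _)]
  exact Finset.sum_comm

variable [DecidableEq m] [DecidableEq n]

theorem rank_eq_iff_exists_isUnit_mul_mul_eq {K : Type*} [Field K] (M N : Matrix m n K) :
    N.rank = M.rank ↔ ∃ (P : Matrix m m K) (Q : Matrix n n K), IsUnit P ∧ IsUnit Q ∧
      N = P * M * Q := by
  constructor
  · intro h
    obtain ⟨e, e', he⟩ :=
      M.mulVecLin.exists_linearEquiv_eq_comp_comp_of_finrank_range_eq N.mulVecLin h.symm
    refine ⟨toMatrix' e, toMatrix' e', isUnit_toMatrix'_iff.mpr ?_,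
      isUnit_toMatrix'_iff.mpr ?_, ?_⟩
    · exact (LinearMap.GeneralLinearGroup.ofLinearEquiv e).isUnit
    · exact (LinearMap.GeneralLinearGroup.ofLinearEquiv e').isUnit
    · rw [← toLin'_apply', ← toLin'_apply'] at he
      rw [← toMatrix'_toLin' N, he, toMatrix'_comp, toMatrix'_comp, toMatrix'_toLin',
        Matrix.mul_assoc]
  · rintro ⟨P, Q, hP, hQ, rfl⟩
    rw [rank_mul_eq_left_of_isUnit_det _ _ ((isUnit_iff_isUnit_det Q).mp hQ),
      rank_mul_eq_right_of_isUnit_det _ _ ((isUnit_iff_isUnit_det P).mp hP)]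

end Matrix

/-- Two bipartite pure states are SLOCC-equivalent iff their coefficient matrices
have the same rank (Schmidt number). -/
theorem bipartite_slocc_iff_rank_eq {d₁ d₂ : ℕ}
    (ψ φ : Fin d₁ × Fin d₂ → ℂ) :
    (∃ (A : Matrix (Fin d₁) (Fin d₁) ℂ) (B : Matrix (Fin d₂) (Fin d₂) ℂ),
        IsUnit A ∧ IsUnit B ∧
        ∀ i j, φ (i, j) = ∑ k : Fin d₁, ∑ l : Fin d₂, A i k * B j l * ψ (k, l)) ↔
    (Matrix.of fun i j => φ (i, j)).rank = (Matrix.of fun i j => ψ (i, j)).rank := by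
  set Cψ : Matrix (Fin d₁) (Fin d₂) ℂ := Matrix.of fun i j => ψ (i, j)
  set Cφ : Matrix (Fin d₁) (Fin d₂) ℂ := Matrix.of fun i j => φ (i, j)
  have slocc_iff (A : Matrix (Fin d₁) (Fin d₁) ℂ) (B : Matrix (Fin d₂) (Fin d₂) ℂ) :
      (∀ i j, φ (i, j) = ∑ k, ∑ l, A i k * B j l * ψ (k, l)) ↔ Cφ = A * Cψ * Bᵀ := by
    rw [← Matrix.ext_iff]
    simp only [Matrix.mul_mul_transpose_apply, Cφ, Cψ, Matrix.of_apply]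
  rw [Matrix.rank_eq_iff_exists_isUnit_mul_mul_eq]
  constructor
  · rintro ⟨A, B, hA, hB, h⟩
    exact ⟨A, Bᵀ, hA, (Matrix.isUnit_transpose B).mpr hB, (slocc_iff A B).mp h⟩
  · rintro ⟨P, Q, hP, hQ, h⟩
    refine ⟨P, Qᵀ, hP, (Matrix.isUnit_transpose Q).mpr hQ, (slocc_iff P Qᵀ).mpr ?_⟩
    rwa [Matrix.transpose_transpose]
end

section
/- The three-qubit GHZ state |000⟩ + |111⟩ is not SLOCC-equivalent to the three-qubit W state |100⟩ + |010⟩ + |001⟩, i.e., there are no invertible 2×2 complex matrices A₁, A₂, A₃ mapping one to the other by local action. -/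
/-!
Any local image of the GHZ state, invertible or not, is a sum of two pure tensors
`u ⊗ v ⊗ w + u' ⊗ v' ⊗ w'`, namely of the images of `|000⟩` and `|111⟩`. The W state is not:
in such a decomposition the slice combination `u'₁ T₀ - u'₀ T₁` eliminates the second term, so it
is a multiple of `v wᵀ` and has determinant zero. For W this determinant is `-u'₁²`, and likewise
`-u₁²` for the other combination, so `u₁ = u'₁ = 0`, contradicting `W(1,0,0) = 1`.
-/

/-- The three-qubit GHZ state `|000⟩ + |111⟩`. -/
noncomputable def GHZ3 : Fin 2 × Fin 2 × Fin 2 → ℂ :=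
  fun x => if x = (0, 0, 0) ∨ x = (1, 1, 1) then 1 else 0

/-- The three-qubit W state `|100⟩ + |010⟩ + |001⟩`. -/
noncomputable def W3 : Fin 2 × Fin 2 × Fin 2 → ℂ :=
  fun x => if x = (1, 0, 0) ∨ x = (0, 1, 0) ∨ x = (0, 0, 1) then 1 else 0

def IsSumOfTwoPureTensors {R ι₁ ι₂ ι₃ : Type*} [Add R] [Mul R] (T : ι₁ × ι₂ × ι₃ → R) : Prop :=
  ∃ (u u' : ι₁ → R) (v v' : ι₂ → R) (w w' : ι₃ → R),
    ∀ i j k, T (i, j, k) = u i * v j * w k + u' i * v' j * w' k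

theorem isSumOfTwoPureTensors_localAction_GHZ3 {ι₁ ι₂ ι₃ : Type*}
    (A₁ : Matrix ι₁ (Fin 2) ℂ) (A₂ : Matrix ι₂ (Fin 2) ℂ) (A₃ : Matrix ι₃ (Fin 2) ℂ) :
    IsSumOfTwoPureTensors fun x : ι₁ × ι₂ × ι₃ =>
      ∑ a : Fin 2, ∑ b : Fin 2, ∑ c : Fin 2, A₁ x.1 a * A₂ x.2.1 b * A₃ x.2.2 c * GHZ3 (a, b, c) :=
  ⟨(A₁ · 0), (A₁ · 1), (A₂ · 0), (A₂ · 1), (A₃ · 0), (A₃ · 1), fun i j k => by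
    simp [Fin.sum_univ_two, GHZ3]⟩

theorem det_slice_elim_eq_zero {R : Type*} [CommRing R] {T : Fin 2 × Fin 2 × Fin 2 → R}
    {u u' v v' w w' : Fin 2 → R}
    (hT : ∀ i j k, T (i, j, k) = u i * v j * w k + u' i * v' j * w' k) :
    (Matrix.of fun j k => u' 1 * T (0, j, k) - u' 0 * T (1, j, k)).det = 0 := by
  simp only [Matrix.det_fin_two, Matrix.of_apply, hT]
  ring

theorem W3_not_isSumOfTwoPureTensors : ¬ IsSumOfTwoPureTensors W3 := by
  rintro ⟨u, u', v, v', w, w', hW⟩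
  have hW' : ∀ i j k, W3 (i, j, k) = u' i * v' j * w' k + u i * v j * w k := fun i j k => by
    rw [hW, add_comm]
  have det_W3_slice (c d : ℂ) :
      (Matrix.of fun j k => c * W3 (0, j, k) - d * W3 (1, j, k)).det = -c ^ 2 := by
    simp [Matrix.det_fin_two, W3]
    ring
  have hu' : u' 1 = 0 := by
    simpa [det_W3_slice] using det_slice_elim_eq_zero hW
  have hu : u 1 = 0 := by
    simpa [det_W3_slice] using det_slice_elim_eq_zero hW'
  simpa [W3, hu, hu'] using hW 1 0 0

/-- The GHZ state is not SLOCC-equivalent to the W state: no invertible local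
operators map one to the other. -/
theorem ghz_not_slocc_equiv_w :
    ¬ ∃ A₁ A₂ A₃ : Matrix (Fin 2) (Fin 2) ℂ,
        IsUnit A₁ ∧ IsUnit A₂ ∧ IsUnit A₃ ∧
        ∀ i j k : Fin 2,
          W3 (i, j, k) =
            ∑ a : Fin 2, ∑ b : Fin 2, ∑ c : Fin 2,
              A₁ i a * A₂ j b * A₃ k c * GHZ3 (a, b, c) := by
  rintro ⟨A₁, A₂, A₃, -, -, -, hW⟩
  have hW3 : W3 = fun x => ∑ a : Fin 2, ∑ b : Fin 2, ∑ c : Fin 2,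
      A₁ x.1 a * A₂ x.2.1 b * A₃ x.2.2 c * GHZ3 (a, b, c) := by
    funext ⟨i, j, k⟩
    exact hW i j k
  exact W3_not_isSumOfTwoPureTensors (hW3 ▸ isSumOfTwoPureTensors_localAction_GHZ3 A₁ A₂ A₃)
end

section
/- Let M be a 2×2 complex matrix with two distinct eigenvalues, and let ψ : Fin 2 × Fin 2 × Fin 2 → ℂ be the three-qubit state with coefficients ψ(i,0,k) = δ_{ik} and ψ(i,1,k) = M(i,k) (coefficient matrix (I₂ | M)). Then ψ is SLOCC-equivalent to the GHZ state |000⟩ + |111⟩. -/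
open Matrix

def middleSlice {R α β γ : Type*} (T : α × β × γ → R) (b : β) : Matrix α γ R :=
  Matrix.of fun a c => T (a, b, c)

theorem sum_mul_mul_mul_eq_sum_mul_middleSlice {R ι κ ν α β γ : Type*} [CommSemiring R]
    [Fintype α] [Fintype β] [Fintype γ]
    (A₁ : Matrix ι α R) (A₂ : Matrix κ β R) (A₃ : Matrix ν γ R) (T : α × β × γ → R)
    (i : ι) (j : κ) (k : ν) :
    ∑ a, ∑ b, ∑ c, A₁ i a * A₂ j b * A₃ k c * T (a, b, c) =
      ∑ b, A₂ j b * (A₁ * middleSlice T b * A₃ᵀ) i k := by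
  simp only [Matrix.mul_apply, middleSlice, of_apply, transpose_apply, Finset.mul_sum,
    Finset.sum_mul]
  rw [Finset.sum_comm]
  refine Finset.sum_congr rfl fun b _ => ?_
  rw [Finset.sum_comm]
  exact Finset.sum_congr rfl fun c _ => Finset.sum_congr rfl fun a _ => by ring

theorem Matrix.exists_isUnit_mul_eq_mul_diagonal {K n : Type*} [Field K] [Fintype n]
    [DecidableEq n] (M : Matrix n n K) (μ : n → K) (hμ : Function.Injective μ)
    (h : ∀ i, Module.End.HasEigenvalue (toLin' M) (μ i)) :
    ∃ P : Matrix n n K, IsUnit P ∧ M * P = P * diagonal μ := by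
  choose v hv using fun i => (h i).exists_hasEigenvector
  refine ⟨(of v)ᵀ, linearIndependent_cols_iff_isUnit.mp
    (Module.End.eigenvectors_linearIndependent' _ μ hμ v hv), ?_⟩
  ext i j
  have hMv : M *ᵥ v j = μ j • v j := by
    simpa only [toLin'_apply] using (hv j).apply_eq_smul
  rw [mul_diagonal]
  simpa [Matrix.mul_apply, mulVec, dotProduct, mul_comm] using congrFun hMv i

theorem exists_isUnit_ghz3_eq_combination_one_diagonal {μ₁ μ₂ : ℂ} (hne : μ₁ ≠ μ₂) :
    ∃ B : Matrix (Fin 2) (Fin 2) ℂ, IsUnit B ∧ ∀ i j k : Fin 2,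
      GHZ3 (i, j, k) =
        B j 0 * (1 : Matrix (Fin 2) (Fin 2) ℂ) i k + B j 1 * diagonal ![μ₁, μ₂] i k := by
  have he : μ₁ - μ₂ ≠ 0 := sub_ne_zero.mpr hne
  refine ⟨(μ₁ - μ₂)⁻¹ • !![-μ₂, 1; μ₁, -1], ?_, fun i j k => ?_⟩
  · rw [isUnit_iff_isUnit_det, det_smul, det_fin_two_of, isUnit_iff_ne_zero]
    have : -μ₂ * -1 - 1 * μ₁ ≠ 0 := fun h => he (by linear_combination -h)
    simp_all
  · fin_cases i <;> fin_cases j <;> fin_cases k <;> simp [GHZ3] <;> field_simp <;> ring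

/-- If `M` is a `2×2` complex matrix with two distinct eigenvalues, the three-qubit
state with coefficient matrix `(I₂ | M)` is SLOCC-equivalent to the GHZ state. -/
theorem coeff_I_M_distinct_eigenvalues_slocc_equiv_ghz
    (M : Matrix (Fin 2) (Fin 2) ℂ)
    (hM : ∃ μ₁ μ₂ : ℂ, μ₁ ≠ μ₂ ∧
      Module.End.HasEigenvalue (Matrix.toLin' M) μ₁ ∧
      Module.End.HasEigenvalue (Matrix.toLin' M) μ₂)
    (ψ : Fin 2 × Fin 2 × Fin 2 → ℂ)
    (hψ0 : ∀ i k : Fin 2, ψ (i, 0, k) = if i = k then 1 else 0)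
    (hψ1 : ∀ i k : Fin 2, ψ (i, 1, k) = M i k) :
    ∃ A₁ A₂ A₃ : Matrix (Fin 2) (Fin 2) ℂ,
      IsUnit A₁ ∧ IsUnit A₂ ∧ IsUnit A₃ ∧
      ∀ i j k : Fin 2,
        GHZ3 (i, j, k) =
          ∑ a : Fin 2, ∑ b : Fin 2, ∑ c : Fin 2,
            A₁ i a * A₂ j b * A₃ k c * ψ (a, b, c) := by
  obtain ⟨μ₁, μ₂, hne, h₁, h₂⟩ := hM
  obtain ⟨P, hP, hMP⟩ := M.exists_isUnit_mul_eq_mul_diagonal ![μ₁, μ₂]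
    (by simpa [Function.Injective, Fin.forall_fin_two] using ⟨hne, hne.symm⟩)
    (Fin.forall_fin_two.mpr ⟨h₁, h₂⟩)
  obtain ⟨B, hB, hGHZ⟩ := exists_isUnit_ghz3_eq_combination_one_diagonal hne
  have hPP : P⁻¹ * P = 1 := nonsing_inv_mul P ((isUnit_iff_isUnit_det P).mp hP)
  have hslice₀ : middleSlice ψ 0 = 1 := by ext i k; simp [middleSlice, hψ0, Matrix.one_apply]
  have hslice₁ : middleSlice ψ 1 = M := by ext i k; simp [middleSlice, hψ1]
  have hdiag : P⁻¹ * M * P = diagonal ![μ₁, μ₂] := by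
    rw [Matrix.mul_assoc, hMP, ← Matrix.mul_assoc, hPP, Matrix.one_mul]
  refine ⟨P⁻¹, B, Pᵀ, isUnit_nonsing_inv_iff.mpr hP, hB, (isUnit_transpose P).mpr hP,
    fun i j k => ?_⟩
  rw [sum_mul_mul_mul_eq_sum_mul_middleSlice, Fin.sum_univ_two, hslice₀, hslice₁,
    transpose_transpose, hdiag, Matrix.mul_one, hPP, hGHZ]
end

section
/- The elementary three-qutrit hypergraph state |H₃⟩, defined by coefficients c_{ijk} = ω^{ijk} for i,j,k ∈ {0,1,2} where ω = e^{2πi/3}, is SLOCC-equivalent to the three-qutrit GHZ state |000⟩ + |111⟩ + |222⟩. -/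
/-! Since `∑ c, ω ^ (a * b * c) • e c` is the Fourier vector of `a * b mod 3`, the Vandermonde
matrix of `1, ω, ω²` on the third qutrit carries the multiplication tensor
`∑ a b, e a ⊗ e b ⊗ e (a * b mod 3)` of `ℤ/3` to `|H₃⟩`. The slices of this tensor in its first
index are `(1,1,1) e₀ᵀ`, the identity and the transposition of `1, 2`: commuting diagonalisable
matrices. A common eigenbasis writes the tensor as a sum of three product vectors, that is, as a
local image of the GHZ state. -/

/-- The three-qutrit GHZ state `|000⟩ + |111⟩ + |222⟩`. -/
noncomputable def GHZ33 : Fin 3 × Fin 3 × Fin 3 → ℂ :=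
  fun x => if x = (0, 0, 0) ∨ x = (1, 1, 1) ∨ x = (2, 2, 2) then 1 else 0

/-- The elementary three-qutrit hypergraph state `|H₃⟩`, with coefficients
`ω^{ijk}` where `ω = e^{2πi/3}`. -/
noncomputable def H3 : Fin 3 × Fin 3 × Fin 3 → ℂ :=
  fun x => Complex.exp (2 * Real.pi * Complex.I / 3) ^
    ((x.1 : ℕ) * (x.2.1 : ℕ) * (x.2.2 : ℕ))

open Matrix
open scoped Kronecker

section SLOCC

variable {K : Type*} [CommSemiring K] {ι₁ ι₂ ι₃ : Type*} [Fintype ι₁] [Fintype ι₂] [Fintype ι₃]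

theorem kronecker_kronecker_mulVec_apply (A₁ : Matrix ι₁ ι₁ K) (A₂ : Matrix ι₂ ι₂ K)
    (A₃ : Matrix ι₃ ι₃ K) (ψ : ι₁ × ι₂ × ι₃ → K) (i : ι₁) (j : ι₂) (k : ι₃) :
    ((A₁ ⊗ₖ (A₂ ⊗ₖ A₃)) *ᵥ ψ) (i, j, k) =
      ∑ a, ∑ b, ∑ c, A₁ i a * A₂ j b * A₃ k c * ψ (a, b, c) := by
  simp only [mulVec, dotProduct, Fintype.sum_prod_type, kronecker_apply, mul_assoc]

variable [DecidableEq ι₁] [DecidableEq ι₂] [DecidableEq ι₃]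

def SLOCCEquiv (φ ψ : ι₁ × ι₂ × ι₃ → K) : Prop :=
  ∃ A₁ A₂ A₃, IsUnit A₁ ∧ IsUnit A₂ ∧ IsUnit A₃ ∧ φ = (A₁ ⊗ₖ (A₂ ⊗ₖ A₃)) *ᵥ ψ

theorem SLOCCEquiv.symm {φ ψ : ι₁ × ι₂ × ι₃ → K} (h : SLOCCEquiv φ ψ) : SLOCCEquiv ψ φ := by
  obtain ⟨_, _, _, ⟨u₁, rfl⟩, ⟨u₂, rfl⟩, ⟨u₃, rfl⟩, rfl⟩ := h
  refine ⟨↑u₁⁻¹, ↑u₂⁻¹, ↑u₃⁻¹, Units.isUnit _, Units.isUnit _, Units.isUnit _, ?_⟩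
  rw [mulVec_mulVec, ← mul_kronecker_mul, ← mul_kronecker_mul, Units.inv_mul, Units.inv_mul,
    Units.inv_mul, one_kronecker_one, one_kronecker_one, one_mulVec]

theorem SLOCCEquiv.trans {φ χ ψ : ι₁ × ι₂ × ι₃ → K} (h : SLOCCEquiv φ χ) (h' : SLOCCEquiv χ ψ) :
    SLOCCEquiv φ ψ := by
  obtain ⟨A₁, A₂, A₃, hA₁, hA₂, hA₃, rfl⟩ := h
  obtain ⟨B₁, B₂, B₃, hB₁, hB₂, hB₃, rfl⟩ := h'
  refine ⟨_, _, _, hA₁.mul hB₁, hA₂.mul hB₂, hA₃.mul hB₃, ?_⟩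
  rw [mulVec_mulVec, ← mul_kronecker_mul, ← mul_kronecker_mul]

end SLOCC

section Hypergraph

variable {K : Type*}

def mulTensor [Zero K] [One K] (n : ℕ) : Fin n × Fin n × Fin n → K :=
  fun x => if x.2.2 = x.1 * x.2.1 then 1 else 0

variable {n : ℕ}

def hypergraphState [Monoid K] (ω : K) : Fin n × Fin n × Fin n → K :=
  fun x => ω ^ ((x.1 : ℕ) * (x.2.1 : ℕ) * (x.2.2 : ℕ))

theorem hypergraphState_eq_vandermonde_mulVec_mulTensor [CommRing K] {ω : K} (hω : ω ^ n = 1) :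
    hypergraphState ω =
      (1 ⊗ₖ (1 ⊗ₖ vandermonde fun i : Fin n => ω ^ (i : ℕ))) *ᵥ mulTensor n := by
  funext ⟨a, b, c⟩
  simp only [hypergraphState, kronecker_kronecker_mulVec_apply, one_apply, mul_ite, mul_one,
    mul_zero, vandermonde_apply, ite_mul, one_mul, zero_mul, mulTensor, Finset.sum_ite_eq',
    Finset.mem_univ, ↓reduceIte, Fin.val_mul, Finset.sum_ite_eq]
  rw [pow_mul, pow_eq_pow_mod (a * b : ℕ) hω, pow_right_comm]

theorem isUnit_vandermonde_pow [Field K] {ω : K} (hω : IsPrimitiveRoot ω n) :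
    IsUnit (vandermonde fun i : Fin n => ω ^ (i : ℕ)) := by
  rw [isUnit_iff_isUnit_det, isUnit_iff_ne_zero, det_vandermonde_ne_zero_iff]
  exact fun i j h => Fin.ext (hω.pow_inj i.isLt j.isLt h)

theorem sloccEquiv_hypergraphState_mulTensor [Field K] {ω : K} (hω : IsPrimitiveRoot ω n) :
    SLOCCEquiv (hypergraphState ω) (mulTensor n) :=
  ⟨1, 1, _, isUnit_one, isUnit_one, isUnit_vandermonde_pow hω,
    hypergraphState_eq_vandermonde_mulVec_mulTensor hω.pow_eq_one⟩

end Hypergraph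

theorem kronecker_kronecker_mulVec_ghz33 (A₁ A₂ A₃ : Matrix (Fin 3) (Fin 3) ℂ) :
    (A₁ ⊗ₖ (A₂ ⊗ₖ A₃)) *ᵥ GHZ33 = fun x => ∑ r, A₁ x.1 r * A₂ x.2.1 r * A₃ x.2.2 r := by
  funext ⟨i, j, k⟩
  simp [kronecker_kronecker_mulVec_apply, GHZ33, Fin.sum_univ_three]

-- The columns of the first matrix are the common eigenbasis `(1,1,1), e₁ + e₂, e₁ - e₂` of the
-- slices of `mulTensor 3` in its first index; those of the last one form the dual basis.
theorem mulTensor_three_eq :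
    mulTensor 3 = ((!![1, 0, 0; 1, 1, 1; 1, 1, -1] : Matrix (Fin 3) (Fin 3) ℂ) ⊗ₖ
      (!![1, 0, 0; 1, 1, 1; 1, 1, -1] ⊗ₖ !![1, -1, 0; 0, 1/2, 1/2; 0, 1/2, -1/2])) *ᵥ GHZ33 := by
  rw [kronecker_kronecker_mulVec_ghz33]
  funext ⟨a, b, c⟩
  fin_cases a <;> fin_cases b <;> fin_cases c <;> simp [mulTensor, Fin.sum_univ_three] <;> norm_num

theorem sloccEquiv_mulTensor_three_ghz33 : SLOCCEquiv (mulTensor 3 : _ → ℂ) GHZ33 := by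
  refine ⟨_, _, _, ?_, ?_, ?_, mulTensor_three_eq⟩ <;>
    simp [isUnit_iff_isUnit_det, det_fin_three] <;> norm_num

/-- `|H₃⟩` is SLOCC-equivalent to the three-qutrit GHZ state. -/
theorem h3_slocc_equiv_ghz :
    ∃ A₁ A₂ A₃ : Matrix (Fin 3) (Fin 3) ℂ,
      IsUnit A₁ ∧ IsUnit A₂ ∧ IsUnit A₃ ∧
      ∀ i j k : Fin 3,
        GHZ33 (i, j, k) =
          ∑ a : Fin 3, ∑ b : Fin 3, ∑ c : Fin 3,
            A₁ i a * A₂ j b * A₃ k c * H3 (a, b, c) := by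
  have hω : IsPrimitiveRoot (Complex.exp (2 * Real.pi * Complex.I / 3)) 3 :=
    Complex.isPrimitiveRoot_exp 3 three_ne_zero
  obtain ⟨A₁, A₂, A₃, hA₁, hA₂, hA₃, hGHZ⟩ :=
    ((sloccEquiv_hypergraphState_mulTensor hω).trans sloccEquiv_mulTensor_three_ghz33).symm
  exact ⟨A₁, A₂, A₃, hA₁, hA₂, hA₃, fun i j k => by
    rw [hGHZ, kronecker_kronecker_mulVec_apply]; rfl⟩
end

section
/- The elementary three-ququart hypergraph state |H₄⟩, defined by coefficients c_{ijk} = ω^{ijk} for i,j,k ∈ {0,1,2,3} where ω = e^{2πi/4} = i, is not SLOCC-equivalent to the three-ququart GHZ state |000⟩ + |111⟩ + |222⟩ + |333⟩. -/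
/-- The elementary three-ququart hypergraph state `|H₄⟩`, with coefficients
`ω^{ijk}` where `ω = e^{2πi/4} = i`. -/
noncomputable def H4 : Fin 4 × Fin 4 × Fin 4 → ℂ :=
  fun x => Complex.I ^ ((x.1 : ℕ) * (x.2.1 : ℕ) * (x.2.2 : ℕ))

/-- The three-ququart GHZ state `|000⟩ + |111⟩ + |222⟩ + |333⟩`. -/
noncomputable def GHZ44 : Fin 4 × Fin 4 × Fin 4 → ℂ :=
  fun x => if x = (0, 0, 0) ∨ x = (1, 1, 1) ∨ x = (2, 2, 2) ∨ x = (3, 3, 3) then 1 else 0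

/-!
Fix the first party's index `i`. The corresponding slice of the GHZ state is the product matrix
`eᵢ eᵢᵀ`, and invertible local operators on the other two parties keep a slice of product form, so
the matrix `Nᵢ(b, c) = ∑ₐ (A₁)ᵢₐ ω^{abc}` has vanishing 2×2 minors. As `Nᵢ(b, c)` only depends on
`bc mod 4`, the minors on rows `{0, 2}` and `{1, 2}` force `∑ₐ (A₁)ᵢₐ = ∑ₐ (-1)ᵃ (A₁)ᵢₐ`. Hence every
row of `A₁` annihilates `e₁ + e₃`, and `A₁` is not invertible.
-/

open Matrix

section Slices

variable {R : Type*} {l m n : Type*}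

def slice (φ : l × m × n → R) (i : l) : Matrix m n R :=
  Matrix.of fun j k => φ (i, j, k)

def contractFirst [AddCommMonoid R] [Mul R] [Fintype l] (x : l → R) (ψ : l × m × n → R) :
    Matrix m n R :=
  Matrix.of fun b c => ∑ a, x a * ψ (a, b, c)

theorem slice_eq_mul_contractFirst_mul [CommSemiring R] {l' m' n' : Type*}
    [Fintype l] [Fintype m] [Fintype n]
    {φ : l' × m' × n' → R} {ψ : l × m × n → R}
    {A₁ : Matrix l' l R} {A₂ : Matrix m' m R} {A₃ : Matrix n' n R}
    (hφ : ∀ i j k, φ (i, j, k) = ∑ a, ∑ b, ∑ c, A₁ i a * A₂ j b * A₃ k c * ψ (a, b, c))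
    (i : l') : slice φ i = A₂ * contractFirst (A₁ i) ψ * A₃ᵀ := by
  ext j k
  simp only [slice, contractFirst, hφ, of_apply, mul_apply, transpose_apply, Finset.sum_mul,
    Finset.mul_sum]
  conv_rhs => rw [Finset.sum_comm]
  rw [Finset.sum_comm]
  refine Finset.sum_congr rfl fun b _ => ?_
  rw [Finset.sum_comm]
  refine Finset.sum_congr rfl fun c _ => Finset.sum_congr rfl fun a _ => ?_
  ring

def TwoMinorsVanish [Mul R] (N : Matrix m n R) : Prop :=
  ∀ b b' c c', N b c * N b' c' = N b c' * N b' c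

theorem twoMinorsVanish_vecMulVec [CommSemigroup R] (u : m → R) (v : n → R) :
    TwoMinorsVanish (vecMulVec u v) := by
  intro b b' c c'
  simp only [vecMulVec_apply]
  ac_rfl

theorem twoMinorsVanish_of_mul_mul_eq_vecMulVec [CommRing R] [Fintype m] [Fintype n]
    [DecidableEq m] [DecidableEq n] {N : Matrix m n R} {P : Matrix m m R} {Q : Matrix n n R}
    (hP : IsUnit P) (hQ : IsUnit Q) {u : m → R} {v : n → R} (h : P * N * Q = vecMulVec u v) :
    TwoMinorsVanish N := by
  have hN : N = vecMulVec (P⁻¹ *ᵥ u) (v ᵥ* Q⁻¹) := by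
    rw [← vecMulVec_mul, ← mul_vecMulVec, ← h]
    simp [← Matrix.mul_assoc, nonsing_inv_mul _ ((isUnit_iff_isUnit_det P).mp hP),
      mul_nonsing_inv_cancel_right (h := (isUnit_iff_isUnit_det Q).mp hQ)]
  rw [hN]
  exact twoMinorsVanish_vecMulVec _ _

end Slices

theorem slice_ghz44 (i : Fin 4) : slice GHZ44 i = vecMulVec (Pi.single i 1) (Pi.single i 1) := by
  rw [← single_eq_single_vecMulVec_single]
  ext j k
  have hsupp : ∀ i j k : Fin 4, ((i, j, k) = (0, 0, 0) ∨ (i, j, k) = (1, 1, 1) ∨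
      (i, j, k) = (2, 2, 2) ∨ (i, j, k) = (3, 3, 3)) ↔ i = j ∧ i = k := by decide
  simp only [slice, GHZ44, of_apply, single_apply, hsupp]

theorem contractFirst_h4_apply (x : Fin 4 → ℂ) (b c : Fin 4) :
    contractFirst x H4 b c = ∑ a : Fin 4, x a * (Complex.I ^ ((b * c : ℕ) % 4)) ^ (a : ℕ) := by
  simp only [contractFirst, H4, of_apply]
  refine Finset.sum_congr rfl fun a _ => ?_
  rw [← Complex.I_pow_eq_pow_mod, ← pow_mul]
  ring

theorem add_eq_zero_of_twoMinorsVanish_contractFirst_h4 {x : Fin 4 → ℂ}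
    (h : TwoMinorsVanish (contractFirst x H4)) : x 1 + x 3 = 0 := by
  set s := x 0 + x 1 + x 2 + x 3
  set t := x 0 - x 1 + x 2 - x 3
  have entry_s {b c : Fin 4} (hbc : (b * c : ℕ) % 4 = 0) : contractFirst x H4 b c = s := by
    simp [contractFirst_h4_apply, hbc, Fin.sum_univ_four, s]
  have entry_t {b c : Fin 4} (hbc : (b * c : ℕ) % 4 = 2) : contractFirst x H4 b c = t := by
    norm_num [contractFirst_h4_apply, hbc, Fin.sum_univ_four, t]
    ring
  have hst : s * t = s * s := by
    simpa [entry_s, entry_t] using h 0 2 0 1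
  have htt : t * t = contractFirst x H4 1 1 * s := by
    simpa [entry_s, entry_t] using h 1 2 2 1
  have hts : t = s := by
    rcases eq_or_ne s 0 with hs0 | hs0
    · rw [hs0, mul_zero, mul_self_eq_zero] at htt
      rw [hs0, htt]
    · exact mul_left_cancel₀ hs0 hst
  linear_combination (-1 / 2 : ℂ) * hts

/-- `|H₄⟩` is not SLOCC-equivalent to the three-ququart GHZ state. -/
theorem h4_not_slocc_equiv_ghz :
    ¬ ∃ A₁ A₂ A₃ : Matrix (Fin 4) (Fin 4) ℂ,
        IsUnit A₁ ∧ IsUnit A₂ ∧ IsUnit A₃ ∧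
        ∀ i j k : Fin 4,
          GHZ44 (i, j, k) =
            ∑ a : Fin 4, ∑ b : Fin 4, ∑ c : Fin 4,
              A₁ i a * A₂ j b * A₃ k c * H4 (a, b, c) := by
  rintro ⟨A₁, A₂, A₃, hA₁, hA₂, hA₃, hslocc⟩
  have hrow (i : Fin 4) : A₁ i 1 + A₁ i 3 = 0 := by
    have hslice := (slice_eq_mul_contractFirst_mul hslocc i).symm.trans (slice_ghz44 i)
    exact add_eq_zero_of_twoMinorsVanish_contractFirst_h4
      (twoMinorsVanish_of_mul_mul_eq_vecMulVec hA₂ ((isUnit_transpose A₃).mpr hA₃) hslice)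
  have hker : A₁ *ᵥ (Pi.single 1 1 + Pi.single 3 1) = A₁ *ᵥ 0 := by
    ext i
    simpa [mulVec_add] using hrow i
  simpa using congrFun (mulVec_injective_of_isUnit hA₁ hker) 1
end

section
/- Let c₀, c₁, c₂ be complex numbers with c₂ ≠ 0, and let ψ : Fin 3 × Fin 3 × Fin 3 → ℂ be the three-qutrit state with coefficients ψ(i,j,k) = c_{i+j+k}, where c_m = 0 for m ≥ 3. Then ψ is SLOCC-equivalent to the three-qutrit Dicke state with two excitations, Σ_{i+j+k=2} |ijk⟩ = |200⟩ + |020⟩ + |002⟩ + |110⟩ + |101⟩ + |011⟩. -/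
/-- The three-qutrit Dicke state with two excitations:
`|200⟩ + |020⟩ + |002⟩ + |110⟩ + |101⟩ + |011⟩`. -/
noncomputable def Dicke32 : Fin 3 × Fin 3 × Fin 3 → ℂ :=
  fun x => if (x.1 : ℕ) + (x.2.1 : ℕ) + (x.2.2 : ℕ) = 2 then 1 else 0

/-- The Hankel-type coefficient sequence: `c₀, c₁, c₂` and `0` for indices `≥ 3`. -/
noncomputable def hankelCoef (c₀ c₁ c₂ : ℂ) : ℕ → ℂ :=
  fun m => if m = 0 then c₀ else if m = 1 then c₁ else if m = 2 then c₂ else 0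

/-!
The Dicke state is itself the Hankel state of `(c₀, c₁, c₂) = (0, 0, 1)`, so it suffices to
pass between two Hankel states by acting on the first qutrit alone. For such a local matrix `A`,
the new coefficient at `(i, j, k)` is `∑ a, A i a * c_{a + n}` with `n = j + k`: for `n ≤ 2`
this is the `(i, n)` entry of `A * H`, where `H a b = c_{a + b}` is the `3 × 3` Hankel matrix,
and for `n ≥ 3` both sides vanish. Since `H` is anti-triangular with determinant `-c₂³`, it is
invertible, and `A = H' * H⁻¹` transforms one Hankel state into the other.
-/

open Matrix

theorem sum_mul_one_mul_one {R ι κ μ : Type*} [CommSemiring R] [Fintype ι] [Fintype κ]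
    [Fintype μ] [DecidableEq κ] [DecidableEq μ] (A : Matrix ι ι R) (ψ : ι × κ × μ → R)
    (i : ι) (j : κ) (k : μ) :
    ∑ a, ∑ b, ∑ c, A i a * (1 : Matrix κ κ R) j b * (1 : Matrix μ μ R) k c * ψ (a, b, c) =
      ∑ a, A i a * ψ (a, j, k) := by
  simp [one_apply, ite_mul]

theorem hankelCoef_eq_zero_of_three_le (c₀ c₁ c₂ : ℂ) {m : ℕ} (hm : 3 ≤ m) :
    hankelCoef c₀ c₁ c₂ m = 0 := by
  simp only [hankelCoef]
  split_ifs <;> first | omega | rfl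

theorem dicke32_eq_hankelCoef (x : Fin 3 × Fin 3 × Fin 3) :
    Dicke32 x = hankelCoef 0 0 1 ((x.1 : ℕ) + (x.2.1 : ℕ) + (x.2.2 : ℕ)) := by
  simp only [Dicke32, hankelCoef]
  split_ifs <;> first | omega | rfl

noncomputable def hankelMatrix (c₀ c₁ c₂ : ℂ) : Matrix (Fin 3) (Fin 3) ℂ :=
  of fun a b => hankelCoef c₀ c₁ c₂ (a + b)

theorem det_hankelMatrix (c₀ c₁ c₂ : ℂ) : (hankelMatrix c₀ c₁ c₂).det = -c₂ ^ 3 := by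
  simp [det_fin_three, hankelMatrix, hankelCoef, pow_three, mul_assoc]

theorem isUnit_hankelMatrix (c₀ c₁ c₂ : ℂ) (hc₂ : c₂ ≠ 0) : IsUnit (hankelMatrix c₀ c₁ c₂) := by
  rw [isUnit_iff_isUnit_det, det_hankelMatrix, isUnit_iff_ne_zero]
  exact neg_ne_zero.mpr (pow_ne_zero 3 hc₂)

theorem sum_mul_hankelCoef_of_mul_hankelMatrix_eq {c₀ c₁ c₂ d₀ d₁ d₂ : ℂ}
    {A : Matrix (Fin 3) (Fin 3) ℂ}
    (hA : A * hankelMatrix c₀ c₁ c₂ = hankelMatrix d₀ d₁ d₂) (i : Fin 3) (n : ℕ) :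
    ∑ a : Fin 3, A i a * hankelCoef c₀ c₁ c₂ (a + n) = hankelCoef d₀ d₁ d₂ (i + n) := by
  by_cases hn : n < 3
  · simpa [mul_apply, hankelMatrix] using congrFun (congrFun hA i) ⟨n, hn⟩
  · rw [hankelCoef_eq_zero_of_three_le _ _ _ (by omega)]
    exact Finset.sum_eq_zero fun a _ => by
      rw [hankelCoef_eq_zero_of_three_le _ _ _ (by omega), mul_zero]

/-- For `c₂ ≠ 0`, the three-qutrit state with coefficients `ψ(i,j,k) = c_{i+j+k}`
(`c_m = 0` for `m ≥ 3`) is SLOCC-equivalent to the Dicke state with two excitations. -/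
theorem hankel_state_slocc_equiv_dicke (c₀ c₁ c₂ : ℂ) (hc₂ : c₂ ≠ 0)
    (ψ : Fin 3 × Fin 3 × Fin 3 → ℂ)
    (hψ : ∀ x : Fin 3 × Fin 3 × Fin 3,
      ψ x = hankelCoef c₀ c₁ c₂ ((x.1 : ℕ) + (x.2.1 : ℕ) + (x.2.2 : ℕ))) :
    ∃ A₁ A₂ A₃ : Matrix (Fin 3) (Fin 3) ℂ,
      IsUnit A₁ ∧ IsUnit A₂ ∧ IsUnit A₃ ∧
      ∀ i j k : Fin 3,
        Dicke32 (i, j, k) =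
          ∑ a : Fin 3, ∑ b : Fin 3, ∑ c : Fin 3,
            A₁ i a * A₂ j b * A₃ k c * ψ (a, b, c) := by
  set H := hankelMatrix c₀ c₁ c₂
  have hH : IsUnit H := isUnit_hankelMatrix c₀ c₁ c₂ hc₂
  have hA : hankelMatrix 0 0 1 * H⁻¹ * H = hankelMatrix 0 0 1 := by
    rw [Matrix.mul_assoc, nonsing_inv_mul _ ((isUnit_iff_isUnit_det H).mp hH), Matrix.mul_one]
  refine ⟨hankelMatrix 0 0 1 * H⁻¹, 1, 1,
    (isUnit_hankelMatrix 0 0 1 one_ne_zero).mul (isUnit_nonsing_inv_iff.mpr hH),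
    isUnit_one, isUnit_one, fun i j k => ?_⟩
  rw [sum_mul_one_mul_one, dicke32_eq_hankelCoef]
  simp only [hψ, Nat.add_assoc]
  exact (sum_mul_hankelCoef_of_mul_hankelMatrix_eq hA i _).symm
end
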